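/- arXiv:2310.11474 — 3 statements merged into one kernel-verified Lean document; each statement's English description precedes it below -/
import Mathlib

section
/- Let A be a symmetric positive semidefinite d×d matrix, γ ∈ C²(ℝ^d) with γ ≥ 1 and ∑_{i,j}|∂²_{ij}γ| ≤ κγ, and let u ∈ C¹_c(ℝ^d) ∩ H¹(γ) (or u in H¹(γ) with sufficient decay for integration by parts). Then ∫_{ℝ^d} ⟨A ∇(u(x)γ(x)), ∇u(x)⟩ dx ≥ − (κ/4) (∑_{i,j}|a_{ij}|) ∫_{ℝ^d} u(x)² γ(x) dx. -/
open MeasureTheory Real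

noncomputable section

open InnerProductSpace in
lemma grad_apply {d : ℕ} (f : EuclideanSpace ℝ (Fin d) → ℝ) (x : EuclideanSpace ℝ (Fin d)) (i : Fin d) :
    gradient f x i = fderiv ℝ f x (EuclideanSpace.single i 1) := by
  have h : (gradient f x) i = ⟪gradient f x, EuclideanSpace.single i (1:ℝ)⟫_ℝ := by
    rw [EuclideanSpace.inner_single_right]; simp
  rw [h, gradient, toDual_symm_apply]


lemma oneD_lower (κ : ℝ) (hκ : 0 ≤ κ) (g g' g'' : ℝ → ℝ)
    (hg : ∀ t, HasDerivAt g (g' t) t) (hg' : ∀ t, HasDerivAt g' (g'' t) t)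
    (hge : ∀ t, 1 ≤ g t) (hb : ∀ t, g'' t ≤ κ * g t) :
    -(Real.sqrt κ * g 0) ≤ g' 0 := by
  by_contra hcon
  push_neg at hcon
  have hg0 : (0:ℝ) < g 0 := lt_of_lt_of_le zero_lt_one (hge 0)
  set m : ℝ := -g' 0 / g 0 with hm
  have hsm : Real.sqrt κ < m := by
    rw [hm, lt_div_iff₀ hg0]; nlinarith
  set c : ℝ := (Real.sqrt κ + m) / 2 with hc
  have hsqrt0 : 0 ≤ Real.sqrt κ := Real.sqrt_nonneg κ
  have hc0 : 0 < c := by rw [hc]; nlinarith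
  have hcs : Real.sqrt κ < c := by rw [hc]; nlinarith
  have hcm : c < m := by rw [hc]; nlinarith
  have hκc : κ ≤ c ^ 2 := by
    have := Real.sq_sqrt hκ
    nlinarith
  set F : ℝ → ℝ := fun t => g' t + c * g t with hF
  have hF0 : F 0 < 0 := by
    have : m * g 0 = -g' 0 := by rw [hm]; field_simp
    simp only [hF]; nlinarith
  have hFd : ∀ t, HasDerivAt F (g'' t + c * g' t) t :=
    fun t => (hg' t).add ((hg t).const_mul c)
  have hFle : ∀ t, g'' t + c * g' t ≤ c * F t := by
    intro t
    have h1 : g'' t ≤ c ^ 2 * g t := le_trans (hb t) (by nlinarith [hge t])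
    simp only [hF]; nlinarith
  -- h1 : F t * exp (-c t) is antitone
  have hanti : Antitone (fun t => F t * Real.exp (-c * t)) := by
    apply antitone_of_deriv_nonpos
    · exact fun t => ((hFd t).mul (((hasDerivAt_id t).const_mul (-c)).exp)).differentiableAt
    · intro t
      have hd : HasDerivAt (fun t => F t * Real.exp (-c * t))
          ((g'' t + c * g' t) * Real.exp (-c * t) + F t * (Real.exp (-c * t) * -c)) t := by
        have he : HasDerivAt (fun t => Real.exp (-c * t)) (Real.exp (-c * t) * -c) t := by
          simpa using (((hasDerivAt_id t).const_mul (-c)).exp)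
        exact (hFd t).mul he
      rw [hd.deriv]
      have hexp : 0 < Real.exp (-c * t) := Real.exp_pos _
      have := hFle t
      nlinarith
  have hFbd : ∀ t ≥ 0, F t ≤ F 0 * Real.exp (c * t) := by
    intro t ht
    have := hanti ht
    simp only [neg_mul, mul_zero, neg_zero, Real.exp_zero, mul_one] at this
    have hexp : 0 < Real.exp (c * t) := Real.exp_pos _
    calc F t = F t * Real.exp (-(c*t)) * Real.exp (c*t) := by
              rw [mul_assoc, ← Real.exp_add]; simp
      _ ≤ F 0 * Real.exp (c * t) := by nlinarith [this]
  -- k antitone on Ici 0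
  set k : ℝ → ℝ := fun t => 2 * c * (g t * Real.exp (c * t)) - F 0 * Real.exp (2 * c * t) with hk
  have hkd : ∀ t, HasDerivAt k
      (2 * c * (F t * Real.exp (c * t)) - F 0 * (Real.exp (2 * c * t) * (2 * c))) t := by
    intro t
    have he1 : HasDerivAt (fun t => Real.exp (c * t)) (Real.exp (c * t) * c) t := by
      simpa using (((hasDerivAt_id t).const_mul c).exp)
    have he2 : HasDerivAt (fun t => F 0 * Real.exp (2 * c * t))
        (F 0 * (Real.exp (2 * c * t) * (2 * c))) t := by
      simpa [mul_comm, mul_assoc, mul_left_comm] using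
        ((((hasDerivAt_id t).const_mul (2 * c)).exp).const_mul (F 0))
    have := (((hg t).mul he1).const_mul (2 * c)).sub he2
    refine this.congr_deriv ?_
    simp only [hF]
    ring
  have hkanti : AntitoneOn k (Set.Ici (0:ℝ)) := by
    apply antitoneOn_of_deriv_nonpos (convex_Ici 0)
    · exact fun t _ => ((hkd t).differentiableAt.continuousAt).continuousWithinAt
    · exact fun t _ => (hkd t).differentiableAt.differentiableWithinAt
    · intro t ht
      rw [interior_Ici] at ht
      rw [(hkd t).deriv]
      have hFt := hFbd t (le_of_lt ht)
      have hexp : 0 < Real.exp (c * t) := Real.exp_pos _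
      have h2 : Real.exp (c * t) * Real.exp (c * t) = Real.exp (2 * c * t) := by
        rw [← Real.exp_add]; ring_nf
      have h3 : F t * Real.exp (c * t) ≤ F 0 * Real.exp (2 * c * t) := by
        calc F t * Real.exp (c * t) ≤ F 0 * Real.exp (c * t) * Real.exp (c * t) :=
              mul_le_mul_of_nonneg_right hFt hexp.le
          _ = F 0 * Real.exp (2 * c * t) := by rw [mul_assoc, h2]
      nlinarith [mul_le_mul_of_nonneg_left h3 (by linarith : (0:ℝ) ≤ 2 * c)]
  -- contradiction
  set a : ℝ := -F 0 with ha
  have ha0 : 0 < a := by rw [ha]; linarith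
  set K : ℝ := 2 * c * g 0 - F 0 with hK
  have hK0 : 0 < K := by
    have : 0 < 2 * c * g 0 := by positivity
    rw [hK]; linarith
  have hbd : ∀ t ≥ 0, a * Real.exp (2 * c * t) ≤ K := by
    intro t ht
    have hmem := hkanti (Set.mem_Ici.2 le_rfl) (Set.mem_Ici.2 ht) ht
    simp only [hk, mul_zero, Real.exp_zero, mul_one] at hmem
    have h1 : 1 ≤ g t := hge t
    have hexp : 0 < Real.exp (c * t) := Real.exp_pos _
    have hrw : a * Real.exp (2 * c * t) = -(F 0 * Real.exp (2 * c * t)) := by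
      rw [ha]; ring
    have hpos : 0 < 2 * c * (g t * Real.exp (c * t)) :=
      mul_pos (by linarith) (mul_pos (by linarith) hexp)
    linarith [hmem, hrw, hpos]
  obtain ⟨t0, ht00, hlog⟩ : ∃ t0, 0 ≤ t0 ∧ Real.log (K / a) + 1 ≤ 2 * c * t0 := by
    refine ⟨max 0 ((Real.log (K / a) + 1) / (2 * c)), le_max_left _ _, ?_⟩
    have h := le_max_right 0 ((Real.log (K / a) + 1) / (2 * c))
    rw [div_le_iff₀ (by positivity : (0:ℝ) < 2 * c)] at h
    linarith [h]
  have hKa : 0 < K / a := div_pos hK0 ha0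
  have hexp : K / a * Real.exp 1 ≤ Real.exp (2 * c * t0) := by
    rw [← Real.exp_log hKa, ← Real.exp_add]
    exact Real.exp_le_exp.2 hlog
  have hfin := hbd t0 ht00
  have he1 : (2:ℝ) < Real.exp 1 := by
    have := Real.exp_one_gt_d9; linarith
  have hKae : a * (K / a * Real.exp 1) = K * Real.exp 1 := by
    field_simp
  clear_value a K
  have hstep : K * Real.exp 1 ≤ K := by
    have h4 := mul_le_mul_of_nonneg_left hexp (le_of_lt ha0)
    linarith [h4, hKae, hfin]
  have h5 : K * 2 < K * Real.exp 1 := mul_lt_mul_of_pos_left he1 hK0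
  linarith

lemma oneD_abs (κ : ℝ) (hκ : 0 ≤ κ) (g g' g'' : ℝ → ℝ)
    (hg : ∀ t, HasDerivAt g (g' t) t) (hg' : ∀ t, HasDerivAt g' (g'' t) t)
    (hge : ∀ t, 1 ≤ g t) (hb : ∀ t, |g'' t| ≤ κ * g t) :
    |g' 0| ≤ Real.sqrt κ * g 0 := by
  rw [abs_le]
  constructor
  · exact oneD_lower κ hκ g g' g'' hg hg' hge (fun t => (abs_le.1 (hb t)).2)
  · -- apply to reflected function
    have hgn : ∀ t : ℝ, HasDerivAt (fun s => g (-s)) (-g' (-t)) t := by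
      intro t
      simpa [Function.comp_def] using (hg (-t)).comp t ((hasDerivAt_id t).neg)
    have hgn' : ∀ t : ℝ, HasDerivAt (fun s => -g' (-s)) (g'' (-t)) t := by
      intro t
      have := ((hg' (-t)).comp t ((hasDerivAt_id t).neg)).neg
      exact this.congr_deriv (by ring)
    have h := oneD_lower κ hκ (fun s => g (-s)) (fun s => -g' (-s)) (fun s => g'' (-s))
      hgn hgn' (fun t => hge (-t))
      (fun t => (abs_le.1 (hb (-t))).2)
    simp only [neg_zero] at h
    linarith

lemma grad_est {d : ℕ} (κ : ℝ) (γ : EuclideanSpace ℝ (Fin d) → ℝ)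
    (hγC2 : ContDiff ℝ 2 γ) (hγ1 : ∀ x, 1 ≤ γ x)
    (hγ2nd : ∀ x : EuclideanSpace ℝ (Fin d),
      (∑ i : Fin d, ∑ j : Fin d,
        |fderiv ℝ (fun y => fderiv ℝ γ y (EuclideanSpace.single i 1)) x
          (EuclideanSpace.single j 1)|) ≤ κ * γ x)
    (hκ : 0 ≤ κ)
    (x : EuclideanSpace ℝ (Fin d)) (i : Fin d) :
    |fderiv ℝ γ x (EuclideanSpace.single i 1)| ≤ Real.sqrt κ * γ x := by
  set e : EuclideanSpace ℝ (Fin d) := EuclideanSpace.single i 1 with he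
  set L : ℝ → EuclideanSpace ℝ (Fin d) := fun t => x + t • e with hL
  have hLd : ∀ t, HasDerivAt L e t := by
    intro t
    simpa [hL] using (((hasDerivAt_id t).smul_const e).const_add x)
  have hγdiff : Differentiable ℝ γ := hγC2.differentiable (by norm_num)
  have hΦ : ContDiff ℝ 1 (fun y => fderiv ℝ γ y e) := by
    have h1 : ContDiff ℝ 1 (fderiv ℝ γ) := hγC2.fderiv_right (le_refl _)
    exact h1.clm_apply contDiff_const
  have hgd : ∀ t, HasDerivAt (fun t => γ (L t)) (fderiv ℝ γ (L t) e) t := by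
    intro t
    exact (hγdiff (L t)).hasFDerivAt.comp_hasDerivAt t (hLd t)
  have hgd' : ∀ t, HasDerivAt (fun t => fderiv ℝ γ (L t) e)
      (fderiv ℝ (fun y => fderiv ℝ γ y e) (L t) e) t := by
    intro t
    exact ((hΦ.differentiable one_ne_zero) (L t)).hasFDerivAt.comp_hasDerivAt t (hLd t)
  have hbnd : ∀ t, |fderiv ℝ (fun y => fderiv ℝ γ y e) (L t) e| ≤ κ * γ (L t) := by
    intro t
    refine le_trans ?_ (hγ2nd (L t))
    have h1 : ∀ i' : Fin d, (0:ℝ) ≤ ∑ j : Fin d,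
        |fderiv ℝ (fun y => fderiv ℝ γ y (EuclideanSpace.single i' 1)) (L t)
          (EuclideanSpace.single j 1)| :=
      fun i' => Finset.sum_nonneg fun _ _ => abs_nonneg _
    calc |fderiv ℝ (fun y => fderiv ℝ γ y e) (L t) e|
        ≤ ∑ j : Fin d, |fderiv ℝ (fun y => fderiv ℝ γ y e) (L t) (EuclideanSpace.single j 1)| := by
          rw [he]
          exact Finset.single_le_sum (f := fun j => |fderiv ℝ (fun y => fderiv ℝ γ y (EuclideanSpace.single i 1)) (L t) (EuclideanSpace.single j 1)|) (fun _ _ => abs_nonneg _) (Finset.mem_univ i)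
      _ ≤ _ := by
          rw [he]
          exact Finset.single_le_sum (f := fun i' => ∑ j : Fin d,
            |fderiv ℝ (fun y => fderiv ℝ γ y (EuclideanSpace.single i' 1)) (L t)
              (EuclideanSpace.single j 1)|) (fun i' _ => h1 i') (Finset.mem_univ i)
  have := oneD_abs κ hκ (fun t => γ (L t)) (fun t => fderiv ℝ γ (L t) e)
    (fun t => fderiv ℝ (fun y => fderiv ℝ γ y e) (L t) e)
    hgd hgd' (fun t => hγ1 (L t)) hbnd
  simpa [hL] using this

lemma psd_sum {d : ℕ} (A : Matrix (Fin d) (Fin d) ℝ) (hA : A.PosSemidef) (z : Fin d → ℝ) :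
    0 ≤ ∑ i : Fin d, ∑ j : Fin d, A i j * z j * z i := by
  have h := hA.dotProduct_mulVec_nonneg z
  simp only [dotProduct, Matrix.mulVec, star_trivial] at h
  refine le_of_le_of_eq h ?_
  apply Finset.sum_congr rfl
  intro i _
  rw [Finset.mul_sum]
  apply Finset.sum_congr rfl
  intro j _
  ring

theorem stmt9 (d : ℕ) (κ : ℝ) (A : Matrix (Fin d) (Fin d) ℝ)
    (hA : A.PosSemidef)
    (γ u : EuclideanSpace ℝ (Fin d) → ℝ)
    (hγC2 : ContDiff ℝ 2 γ) (hγ1 : ∀ x, 1 ≤ γ x)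
    (hγ2nd : ∀ x : EuclideanSpace ℝ (Fin d),
      (∑ i : Fin d, ∑ j : Fin d,
        |fderiv ℝ (fun y => fderiv ℝ γ y (EuclideanSpace.single i 1)) x
          (EuclideanSpace.single j 1)|) ≤ κ * γ x)
    (hu : ContDiff ℝ 1 u) (hsupp : HasCompactSupport u) :
    (∫ x, ∑ i : Fin d, ∑ j : Fin d,
        A i j * (gradient (fun y => u y * γ y) x) j * (gradient u x) i) ≥
      -(κ / 4) * (∑ i : Fin d, ∑ j : Fin d, |A i j|) * ∫ x, u x ^ 2 * γ x := by
  have hκ0 : 0 ≤ κ := by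
    have h := hγ2nd 0
    have h1 := hγ1 0
    have h2 : (0:ℝ) ≤ ∑ i : Fin d, ∑ j : Fin d,
        |fderiv ℝ (fun y => fderiv ℝ γ y (EuclideanSpace.single i 1)) 0
          (EuclideanSpace.single j 1)| :=
      Finset.sum_nonneg fun _ _ => Finset.sum_nonneg fun _ _ => abs_nonneg _
    nlinarith
  have hγpos : ∀ x, (0:ℝ) < γ x := fun x => lt_of_lt_of_le zero_lt_one (hγ1 x)
  have hgrad := grad_est κ γ hγC2 hγ1 hγ2nd hκ0
  set SA : ℝ := ∑ i : Fin d, ∑ j : Fin d, |A i j| with hSA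
  have hSA0 : 0 ≤ SA :=
    Finset.sum_nonneg fun _ _ => Finset.sum_nonneg fun _ _ => abs_nonneg _
  have hudiff : Differentiable ℝ u := hu.differentiable one_ne_zero
  have hγdiff : Differentiable ℝ γ := hγC2.differentiable (by norm_num)
  have huγ : ContDiff ℝ 1 (fun y => u y * γ y) := hu.mul (hγC2.of_le one_le_two)
  have hgu : ∀ (x : EuclideanSpace ℝ (Fin d)) (i : Fin d),
      gradient u x i = fderiv ℝ u x (EuclideanSpace.single i 1) := fun x i => grad_apply u x i
  have hguγ : ∀ (x : EuclideanSpace ℝ (Fin d)) (j : Fin d),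
      gradient (fun y => u y * γ y) x j
      = u x * fderiv ℝ γ x (EuclideanSpace.single j 1)
        + γ x * fderiv ℝ u x (EuclideanSpace.single j 1) := by
    intro x j
    rw [grad_apply, fderiv_fun_mul (hudiff x) (hγdiff x)]
    simp
  -- pointwise bound
  have hpt : ∀ x, -(κ/4) * SA * (u x ^ 2 * γ x) ≤
      ∑ i : Fin d, ∑ j : Fin d,
        A i j * (gradient (fun y => u y * γ y) x) j * (gradient u x) i := by
    intro x
    set w : Fin d → ℝ := fun i => fderiv ℝ u x (EuclideanSpace.single i 1) with hw
    set G : Fin d → ℝ := fun i => fderiv ℝ γ x (EuclideanSpace.single i 1) with hG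
    set z : Fin d → ℝ := fun i => 2 * γ x * w i + u x * G i with hz
    have hS2 : 0 ≤ ∑ i : Fin d, ∑ j : Fin d, A i j * z j * z i := psd_sum A hA z
    have hsym : ∑ i : Fin d, ∑ j : Fin d, A i j * w j * G i
        = ∑ i : Fin d, ∑ j : Fin d, A i j * G j * w i := by
      rw [Finset.sum_comm]
      apply Finset.sum_congr rfl; intro i _
      apply Finset.sum_congr rfl; intro j _
      have hh := hA.1.apply i j
      simp only [star_trivial] at hh
      rw [← hh]; ring
    have hfx : ∑ i : Fin d, ∑ j : Fin d,
        A i j * (gradient (fun y => u y * γ y) x) j * (gradient u x) i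
        = γ x * (∑ i : Fin d, ∑ j : Fin d, A i j * w j * w i)
          + u x * (∑ i : Fin d, ∑ j : Fin d, A i j * G j * w i) := by
      rw [Finset.mul_sum, Finset.mul_sum, ← Finset.sum_add_distrib]
      apply Finset.sum_congr rfl; intro i _
      rw [Finset.mul_sum, Finset.mul_sum, ← Finset.sum_add_distrib]
      apply Finset.sum_congr rfl; intro j _
      rw [hguγ x j, hgu x i]
      simp only [hw, hG]
      ring
    have hterm : ∀ i j, A i j * z j * z i
        = 4*(γ x)^2 * (A i j * w j * w i) + 2*γ x*u x*(A i j * w j * G i)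
          + 2*γ x*u x*(A i j * G j * w i) + (u x)^2*(A i j * G j * G i) := by
      intro i j; simp only [hz]; ring
    have hsum : (∑ i : Fin d, ∑ j : Fin d, A i j * z j * z i)
        = 4*(γ x)^2 * (∑ i : Fin d, ∑ j : Fin d, A i j * w j * w i)
          + 2*γ x*u x*(∑ i : Fin d, ∑ j : Fin d, A i j * w j * G i)
          + 2*γ x*u x*(∑ i : Fin d, ∑ j : Fin d, A i j * G j * w i)
          + (u x)^2*(∑ i : Fin d, ∑ j : Fin d, A i j * G j * G i) := by
      simp only [hterm, Finset.sum_add_distrib, ← Finset.mul_sum]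
    have hBGG : (∑ i : Fin d, ∑ j : Fin d, A i j * G j * G i) ≤ SA * (κ * γ x^2) := by
      have hstep : ∀ i j : Fin d, A i j * G j * G i ≤ |A i j| * (κ * γ x^2) := by
        intro i j
        have h1 := hgrad x i
        have h2 := hgrad x j
        have hsq : Real.sqrt κ * Real.sqrt κ = κ := Real.mul_self_sqrt hκ0
        calc A i j * G j * G i ≤ |A i j * G j * G i| := le_abs_self _
          _ = |A i j| * (|G j| * |G i|) := by rw [abs_mul, abs_mul]; ring
          _ ≤ |A i j| * ((Real.sqrt κ * γ x) * (Real.sqrt κ * γ x)) := by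
              apply mul_le_mul_of_nonneg_left _ (abs_nonneg _)
              exact mul_le_mul h2 h1 (abs_nonneg _)
                (mul_nonneg (Real.sqrt_nonneg _) (hγpos x).le)
          _ = |A i j| * (κ * γ x^2) := by
              rw [show (Real.sqrt κ * γ x) * (Real.sqrt κ * γ x)
                  = (Real.sqrt κ * Real.sqrt κ) * (γ x^2) from by ring, hsq]
      calc (∑ i : Fin d, ∑ j : Fin d, A i j * G j * G i)
          ≤ ∑ i : Fin d, ∑ j : Fin d, |A i j| * (κ * γ x^2) :=
            Finset.sum_le_sum fun i _ => Finset.sum_le_sum fun j _ => hstep i j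
        _ = SA * (κ * γ x^2) := by
            rw [hSA, Finset.sum_mul]
            exact Finset.sum_congr rfl fun i _ => by rw [Finset.sum_mul]
    rw [hfx]
    have hid : 4 * γ x * (γ x * (∑ i : Fin d, ∑ j : Fin d, A i j * w j * w i)
          + u x * (∑ i : Fin d, ∑ j : Fin d, A i j * G j * w i))
        = (∑ i : Fin d, ∑ j : Fin d, A i j * z j * z i)
          - (u x)^2 * (∑ i : Fin d, ∑ j : Fin d, A i j * G j * G i) := by
      rw [hsum, hsym]; ring
    nlinarith [hS2, hid, mul_le_mul_of_nonneg_left hBGG (sq_nonneg (u x)), hγpos x,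
      sq_nonneg (u x)]
  -- continuity and integrability
  have hcw : ∀ i : Fin d, Continuous fun x => fderiv ℝ u x (EuclideanSpace.single i 1) :=
    fun i => (hu.continuous_fderiv one_ne_zero).clm_apply continuous_const
  have hcG : ∀ i : Fin d, Continuous fun x => fderiv ℝ γ x (EuclideanSpace.single i 1) :=
    fun i => ((hγC2.of_le one_le_two).continuous_fderiv one_ne_zero).clm_apply continuous_const
  have hfeq : (fun x => ∑ i : Fin d, ∑ j : Fin d,
      A i j * (gradient (fun y => u y * γ y) x) j * (gradient u x) i)
      = fun x => ∑ i : Fin d, ∑ j : Fin d,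
        A i j * (u x * fderiv ℝ γ x (EuclideanSpace.single j 1)
          + γ x * fderiv ℝ u x (EuclideanSpace.single j 1))
          * fderiv ℝ u x (EuclideanSpace.single i 1) := by
    funext x
    exact Finset.sum_congr rfl fun i _ => Finset.sum_congr rfl fun j _ => by
      rw [hguγ x j, hgu x i]
  have hcont_f : Continuous (fun x => ∑ i : Fin d, ∑ j : Fin d,
      A i j * (gradient (fun y => u y * γ y) x) j * (gradient u x) i) := by
    rw [hfeq]
    apply continuous_finset_sum
    intro i _
    apply continuous_finset_sum
    intro j _
    exact (continuous_const.mul ((hu.continuous.mul (hcG j)).add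
      (hγC2.continuous.mul (hcw j)))).mul (hcw i)
  have hsupp_f : HasCompactSupport (fun x => ∑ i : Fin d, ∑ j : Fin d,
      A i j * (gradient (fun y => u y * γ y) x) j * (gradient u x) i) := by
    apply HasCompactSupport.mono' (hsupp.fderiv ℝ)
    intro x hx
    simp only [Function.mem_support, ne_eq] at hx
    by_contra hfz
    apply hx
    apply Finset.sum_eq_zero
    intro i _
    apply Finset.sum_eq_zero
    intro j _
    have h0 : fderiv ℝ u x = 0 := image_eq_zero_of_notMem_tsupport hfz
    rw [hgu x i, h0]
    simp
  have hint_f : Integrable (fun x => ∑ i : Fin d, ∑ j : Fin d,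
      A i j * (gradient (fun y => u y * γ y) x) j * (gradient u x) i) :=
    hcont_f.integrable_of_hasCompactSupport hsupp_f
  have hcont_h : Continuous (fun x => -(κ/4) * SA * (u x ^ 2 * γ x)) :=
    continuous_const.mul ((hu.continuous.pow 2).mul hγC2.continuous)
  have hsupp_h : HasCompactSupport (fun x => -(κ/4) * SA * (u x ^ 2 * γ x)) := by
    apply HasCompactSupport.mono' hsupp
    intro x hx
    simp only [Function.mem_support, ne_eq] at hx
    apply subset_closure
    simp only [Function.mem_support, ne_eq]
    intro hux
    exact hx (by rw [hux]; ring)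
  have hint_h : Integrable (fun x => -(κ/4) * SA * (u x ^ 2 * γ x)) :=
    hcont_h.integrable_of_hasCompactSupport hsupp_h
  have hmono : (∫ x, -(κ/4) * SA * (u x ^ 2 * γ x))
      ≤ ∫ x, ∑ i : Fin d, ∑ j : Fin d,
        A i j * (gradient (fun y => u y * γ y) x) j * (gradient u x) i :=
    integral_mono hint_h hint_f hpt
  have heq : (∫ x, -(κ/4) * SA * (u x ^ 2 * γ x)) = -(κ/4) * SA * ∫ x, u x ^ 2 * γ x :=
    integral_const_mul _ _
  rw [ge_iff_le, ← heq]
  exact hmono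
end
end

section
/- Let (Y, d_Y) be a complete metric space, F : Y → ℝ ∪ {−∞} upper semicontinuous, not identically −∞, and bounded above. Let ε > 0 and y₀ ∈ Y satisfy F(y₀) ≥ sup_Y F − ε. Then there exist points y_k ∈ Y (k ≥ 1), y_ε ∈ Y, and nonnegative β_k with ∑β_k = 1, such that d_Y(y_k, y_ε) → 0, sup_k d_Y(y_k, y_ε) ≤ ε^{1/4}, d_Y(y_ε, y₀) ≤ ε^{1/4}, F(y_ε) ≥ sup_Y F − ε, and for all y ∈ Y: F(y_ε) − √ε Δ(y_ε) ≥ F(y) − √ε Δ(y), where Δ(y) := ∑_{k=1}^∞ β_k d_Y(y, y_k)². -/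
open Filter Topology

noncomputable section BPaux

variable {Y : Type*} [MetricSpace Y]

/-- partial perturbed function -/
def bpF (f : Y → ℝ) (w : ℕ → ℝ) (cc : ℕ → Y) (n : ℕ) (y : Y) : ℝ :=
  f y + ∑ k ∈ Finset.range (n + 1), w k * dist y (cc k) ^ 2

open Classical in
def bpPick (f : Y → ℝ) (w η : ℕ → ℝ) (x₀ : Y) (cc : ℕ → Y) (n : ℕ) : Y :=
  if h : ∃ z, bpF f w cc n z < (⨅ z, bpF f w cc n z) + η (n + 1) then h.choose else x₀

def bpState (f : Y → ℝ) (w η : ℕ → ℝ) (x₀ : Y) : ℕ → ℕ → Y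
  | 0 => fun _ => x₀
  | n + 1 =>
      Function.update (bpState f w η x₀ n) (n + 1)
        (bpPick f w η x₀ (bpState f w η x₀ n) n)

def bpSeq (f : Y → ℝ) (w η : ℕ → ℝ) (x₀ : Y) (n : ℕ) : Y := bpState f w η x₀ n n

set_option linter.unusedSectionVars false
variable (f : Y → ℝ) (w η : ℕ → ℝ) (x₀ : Y)

lemma bpSeq_zero : bpSeq f w η x₀ 0 = x₀ := rfl

lemma bpState_eq : ∀ n m, m ≤ n → bpState f w η x₀ n m = bpSeq f w η x₀ m := by
  intro n
  induction n with
  | zero => intro m hm; interval_cases m; rfl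
  | succ n ih =>
      intro m hm
      rcases Nat.lt_or_ge m (n + 1) with h | h
      · have h1 : bpState f w η x₀ (n + 1) m = bpState f w η x₀ n m := by
          show Function.update (bpState f w η x₀ n) (n + 1) _ m = _
          exact Function.update_of_ne (by omega) _ _
        rw [h1, ih m (by omega)]
      · have : m = n + 1 := le_antisymm hm h
        subst this; rfl

lemma bpF_congr (c c' : ℕ → Y) (n : ℕ) (h : ∀ k ≤ n, c k = c' k) :
    bpF f w c n = bpF f w c' n := by
  funext y
  unfold bpF
  congr 1
  refine Finset.sum_congr rfl fun k hk => ?_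
  rw [h k (by simpa [Nat.lt_succ_iff] using hk)]

lemma bpSeq_spec [Nonempty Y] (hη : ∀ n, 0 < η (n + 1)) (n : ℕ) :
    bpF f w (bpSeq f w η x₀) n (bpSeq f w η x₀ (n + 1)) <
      (⨅ z, bpF f w (bpSeq f w η x₀) n z) + η (n + 1) := by
  have hcong : bpF f w (bpState f w η x₀ n) n = bpF f w (bpSeq f w η x₀) n :=
    bpF_congr f w _ _ n (fun k hk => bpState_eq f w η x₀ n k hk)
  have hex : ∃ z, bpF f w (bpState f w η x₀ n) n z <
      (⨅ z, bpF f w (bpState f w η x₀ n) n z) + η (n + 1) := by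
    apply exists_lt_of_ciInf_lt
    exact lt_add_of_pos_right _ (hη n)
  have hseq : bpSeq f w η x₀ (n + 1) = bpPick f w η x₀ (bpState f w η x₀ n) n := by
    show Function.update (bpState f w η x₀ n) (n + 1) _ (n + 1) = _
    exact Function.update_self _ _ _
  rw [hseq]
  unfold bpPick
  rw [dif_pos hex]
  have := hex.choose_spec
  rw [← hcong]; exact this

lemma geo_bound (r : ℝ) (h0 : 0 ≤ r) (h1 : r ≤ 1/2) (k m : ℕ) :
    ∑ j ∈ Finset.Icc k m, r ^ j ≤ 2 * r ^ k := by
  have main : ∀ m k, k ≤ m + 1 → ∑ j ∈ Finset.Icc k m, r ^ j ≤ 2 * (r ^ k - r ^ (m + 1)) := by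
    intro m
    induction m with
    | zero =>
        intro k hk
        interval_cases k
        · rw [Finset.Icc_self, Finset.sum_singleton]
          norm_num; linarith
        · rw [Finset.Icc_eq_empty (by omega)]
          simp
    | succ m ih =>
        intro k hk
        rcases Nat.lt_or_ge k (m + 2) with h | h
        · have hk' : k ≤ m + 1 := by omega
          rw [Finset.sum_Icc_succ_top (by omega)]
          have h2 := ih k hk'
          have h3 : r ^ (m + 2) = r ^ (m + 1) * r := by rw [pow_succ]
          have h4 : 2 * r ^ (m + 2) ≤ r ^ (m + 1) := by
            nlinarith [pow_nonneg h0 (m + 1)]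
          linarith
        · have : k = m + 2 := by omega
          subst this
          rw [Finset.Icc_eq_empty (by omega)]
          simp
  rcases Nat.lt_or_ge m k with h | h
  · rw [Finset.Icc_eq_empty (by omega)]
    simp
    positivity
  · have h2 := main m k (by omega)
    have h3 : 0 ≤ r ^ (m + 1) := pow_nonneg h0 _
    linarith

end BPaux

set_option maxHeartbeats 2000000 in
lemma bp_core {Y : Type*} [MetricSpace Y] [CompleteSpace Y] [Nonempty Y]
    (f : Y → ℝ) (hlsc : LowerSemicontinuous f)
    (lb : ℝ) (hlb : ∀ y, lb ≤ f y)
    (ε : ℝ) (hε : 0 < ε) (x₀ : Y) (h₀ : f x₀ ≤ (⨅ y, f y) + ε) :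
    ∃ (c : ℕ → Y) (v : Y) (β : ℕ → ℝ),
      (∀ k, 0 ≤ β k) ∧ (∑' k, β k) = 1 ∧
      Tendsto (fun k => dist (c k) v) atTop (𝓝 0) ∧
      (∀ k, dist (c k) v ≤ ε ^ ((1:ℝ)/4)) ∧
      dist v x₀ ≤ ε ^ ((1:ℝ)/4) ∧
      f v ≤ (⨅ y, f y) + ε ∧
      ∀ z, f v + Real.sqrt ε * ∑' k, β k * dist v (c k) ^ 2 ≤
           f z + Real.sqrt ε * ∑' k, β k * dist z (c k) ^ 2 := by
  have hδ : 0 < Real.sqrt ε := Real.sqrt_pos.2 hε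
  have hδδ : Real.sqrt ε * Real.sqrt ε = ε := Real.mul_self_sqrt hε.le
  set δ := Real.sqrt ε with hδdef
  have hLδ : ε ^ ((1:ℝ)/4) = Real.sqrt δ := by
    rw [hδdef, Real.sqrt_eq_rpow, Real.sqrt_eq_rpow, ← Real.rpow_mul hε.le]
    norm_num
  have hL0 : 0 ≤ ε ^ ((1:ℝ)/4) := Real.rpow_nonneg hε.le _
  set i0 := ⨅ y, f y with hi0def
  have hbddf : BddBelow (Set.range f) := ⟨lb, by rintro _ ⟨y, rfl⟩; exact hlb y⟩
  have hi0 : ∀ y, i0 ≤ f y := fun y => ciInf_le hbddf y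
  by_cases hB : ∀ z, i0 + ε ≤ f z + δ * dist z x₀ ^ 2
  · -- Case B : x₀ itself works
    refine ⟨fun _ => x₀, x₀, fun k => if k = 0 then 1 else 0, ?_, ?_, ?_, ?_, ?_, h₀, ?_⟩
    · intro k
      show (0:ℝ) ≤ if k = 0 then 1 else 0
      split <;> norm_num
    · exact tsum_ite_eq 0 1
    · simpa [dist_self] using (tendsto_const_nhds : Tendsto (fun _ : ℕ => (0:ℝ)) atTop (𝓝 0))
    · intro k; simpa [dist_self] using hL0
    · simpa [dist_self] using hL0
    · intro z
      have hz : ∀ u : Y, (∑' k : ℕ, (if k = 0 then (1:ℝ) else 0) * dist u x₀ ^ 2)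
          = dist u x₀ ^ 2 := by
        intro u
        rw [tsum_mul_right, tsum_ite_eq 0 (fun _ => (1:ℝ)), one_mul]
      show f x₀ + δ * ∑' k : ℕ, (if k = 0 then (1:ℝ) else 0) * dist x₀ x₀ ^ 2 ≤
        f z + δ * ∑' k : ℕ, (if k = 0 then (1:ℝ) else 0) * dist z x₀ ^ 2
      rw [hz, hz, dist_self]
      have h2 := (h₀.trans (hB z))
      have h3 : (0:ℝ) ^ 2 = 0 := by norm_num
      rw [h3, mul_zero, add_zero]
      exact h2
  · push_neg at hB
    obtain ⟨zh, hzh⟩ := hB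
    set G := i0 + ε - (f zh + δ * dist zh x₀ ^ 2) with hGdef
    have hG : 0 < G := by rw [hGdef]; linarith
    set m' := max (1/2 : ℝ) (1 - G / (2 * ε)) with hm'def
    have hm_half : (1/2 : ℝ) ≤ m' := le_max_left _ _
    have hm0 : 0 < m' := lt_of_lt_of_le (by norm_num) hm_half
    have hm1 : m' < 1 := by
      apply max_lt (by norm_num)
      have : 0 < G / (2 * ε) := div_pos hG (by linarith)
      linarith
    have hm2 : ε * (1 - m') ≤ G / 2 := by
      have h1 : 1 - G / (2 * ε) ≤ m' := le_max_right _ _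
      have h2 : 1 - m' ≤ G / (2 * ε) := by linarith
      have h3 : ε * (1 - m') ≤ ε * (G / (2 * ε)) := mul_le_mul_of_nonneg_left h2 hε.le
      have h4 : ε * (G / (2 * ε)) = G / 2 := by field_simp
      linarith
    obtain ⟨w, hw0, hwS⟩ : ∃ w : ℕ → ℝ, w 0 = δ * m' ∧
        ∀ k, w (k + 1) = δ * (1 - m') * (1/2 : ℝ) ^ (k + 1) :=
      ⟨fun k => if k = 0 then δ * m' else δ * (1 - m') * (1/2 : ℝ) ^ k, rfl, fun k => rfl⟩
    have hw : ∀ k, 0 < w k := by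
      intro k
      cases k with
      | zero => rw [hw0]; exact mul_pos hδ hm0
      | succ k => rw [hwS]; exact mul_pos (mul_pos hδ (by linarith)) (by positivity)
    have hwle : ∀ k, w k ≤ δ * (1/2 : ℝ) ^ k := by
      intro k
      cases k with
      | zero => rw [hw0]; simpa using mul_le_mul_of_nonneg_left hm1.le hδ.le
      | succ k =>
          rw [hwS]
          have h2 : (0:ℝ) ≤ (1/2:ℝ) ^ (k+1) := by positivity
          nlinarith [mul_nonneg (mul_nonneg hδ.le hm0.le) h2]
    set iA := ⨅ z, (f z + w 0 * dist z x₀ ^ 2) with hiAdef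
    have hbddA : BddBelow (Set.range (fun z => f z + w 0 * dist z x₀ ^ 2)) := by
      refine ⟨lb, ?_⟩
      rintro _ ⟨y, rfl⟩
      show lb ≤ f y + w 0 * dist y x₀ ^ 2
      have h1 : (0:ℝ) ≤ w 0 * dist y x₀ ^ 2 := mul_nonneg (hw 0).le (sq_nonneg _)
      linarith [hlb y]
    have hkey : f zh + w 0 * dist zh x₀ ^ 2 < i0 + ε * m' := by
      rw [hw0]
      nlinarith [mul_nonneg (mul_nonneg hδ.le (sub_nonneg.2 hm1.le)) (sq_nonneg (dist zh x₀))]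
    have hiAle : iA ≤ f zh + w 0 * dist zh x₀ ^ 2 := ciInf_le hbddA zh
    set Bs := i0 + ε * m' - iA with hBsdef
    have hBs : 0 < Bs := by rw [hBsdef]; linarith
    obtain ⟨η, hηd⟩ : ∃ η : ℕ → ℝ, ∀ k,
        η k = min (Bs * (1/2:ℝ) ^ (k+1)) (w k * δ * (1/8:ℝ) ^ k) := ⟨_, fun _ => rfl⟩
    have hηpos : ∀ k, 0 < η k := by
      intro k
      rw [hηd]
      exact lt_min (by positivity) (mul_pos (mul_pos (hw k) hδ) (by positivity))
    have hη1 : ∀ j, η j ≤ Bs * (1/2:ℝ) ^ (j+1) := fun j => (hηd j) ▸ min_le_left _ _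
    have hη2 : ∀ j, η j ≤ w j * δ * (1/8:ℝ) ^ j := fun j => (hηd j) ▸ min_le_right _ _
    set c := bpSeq f w η x₀ with hcdef
    have hc0 : c 0 = x₀ := rfl
    set fn := bpF f w c with hfndef
    set i : ℕ → ℝ := fun n => ⨅ z, fn n z with hidef
    have hchoice : ∀ n, fn n (c (n+1)) < i n + η (n+1) :=
      fun n => bpSeq_spec f w η x₀ (fun n => hηpos (n+1)) n
    have hfn_lb : ∀ n y, lb ≤ fn n y := by
      intro n y
      show lb ≤ f y + ∑ k ∈ Finset.range (n+1), w k * dist y (c k) ^ 2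
      have h1 : (0:ℝ) ≤ ∑ k ∈ Finset.range (n+1), w k * dist y (c k) ^ 2 :=
        Finset.sum_nonneg fun k _ => mul_nonneg (hw k).le (sq_nonneg _)
      linarith [hlb y]
    have hbddfn : ∀ n, BddBelow (Set.range (fn n)) :=
      fun n => ⟨lb, by rintro _ ⟨y, rfl⟩; exact hfn_lb n y⟩
    have hi_le : ∀ n y, i n ≤ fn n y := fun n y => ciInf_le (hbddfn n) y
    have hfn_succ : ∀ n y, fn (n+1) y = fn n y + w (n+1) * dist y (c (n+1)) ^ 2 := by
      intro n y
      show f y + ∑ k ∈ Finset.range (n+1+1), w k * dist y (c k) ^ 2 =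
        (f y + ∑ k ∈ Finset.range (n+1), w k * dist y (c k) ^ 2) + w (n+1) * dist y (c (n+1)) ^ 2
      rw [Finset.sum_range_succ]; ring
    have hfn_mono : ∀ n m, n ≤ m → ∀ y, fn n y ≤ fn m y := by
      intro n m hnm y
      induction m, hnm using Nat.le_induction with
      | base => exact le_refl _
      | succ m hm ih =>
          rw [hfn_succ]
          have := mul_nonneg (hw (m+1)).le (sq_nonneg (dist y (c (m+1))))
          linarith
    have hii : ∀ n, i (n+1) ≤ i n + η (n+1) := by
      intro n
      have h1 : i (n+1) ≤ fn (n+1) (c (n+1)) := hi_le _ _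
      have h2 : fn (n+1) (c (n+1)) = fn n (c (n+1)) := by
        rw [hfn_succ]; simp [dist_self]
      have h3 := hchoice n
      linarith
    have hIcc : ∀ n m, n ≤ m → i m ≤ i n + ∑ j ∈ Finset.Icc (n+1) m, η j := by
      intro n m hnm
      induction m, hnm using Nat.le_induction with
      | base =>
          rw [Finset.Icc_eq_empty (by omega)]
          simp
      | succ m hm ih =>
          have h1 := hii m
          have h2 : ∑ j ∈ Finset.Icc (n+1) (m+1), η j
              = ∑ j ∈ Finset.Icc (n+1) m, η j + η (m+1) :=
            Finset.sum_Icc_succ_top (by omega) η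
          linarith
    have hsum1 : ∀ n m, ∑ j ∈ Finset.Icc (n+1) m, η j ≤ Bs * (1/2:ℝ) ^ (n+1) := by
      intro n m
      calc ∑ j ∈ Finset.Icc (n+1) m, η j
          ≤ ∑ j ∈ Finset.Icc (n+1) m, Bs * (1/2:ℝ) ^ (j+1) :=
            Finset.sum_le_sum (fun j _ => hη1 j)
        _ = (Bs * (1/2)) * ∑ j ∈ Finset.Icc (n+1) m, (1/2:ℝ) ^ j := by
            rw [Finset.mul_sum]
            refine Finset.sum_congr rfl fun j _ => ?_
            rw [pow_succ]; ring
        _ ≤ (Bs * (1/2)) * (2 * (1/2:ℝ) ^ (n+1)) := by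
            apply mul_le_mul_of_nonneg_left (geo_bound _ (by norm_num) (by norm_num) _ _)
            have := hBs.le; positivity
        _ = Bs * (1/2:ℝ) ^ (n+1) := by ring
    have hsum2 : ∀ l m, ∑ j ∈ Finset.Icc (l+1) m, η j
        ≤ δ * δ * (1 - m') * (2 * (1/16:ℝ) ^ (l+1)) := by
      intro l m
      have step : ∀ j ∈ Finset.Icc (l+1) m, η j ≤ (δ * δ * (1 - m')) * (1/16:ℝ) ^ j := by
        intro j hj
        have hj1 : l + 1 ≤ j := (Finset.mem_Icc.1 hj).1
        obtain ⟨t, rfl⟩ : ∃ t, j = t + 1 := ⟨j - 1, by omega⟩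
        have h1 := hη2 (t+1)
        rw [hwS t] at h1
        calc η (t+1) ≤ δ * (1 - m') * (1/2:ℝ) ^ (t+1) * δ * (1/8:ℝ) ^ (t+1) := h1
          _ = (δ * δ * (1 - m')) * ((1/2:ℝ) * (1/8:ℝ)) ^ (t+1) := by rw [mul_pow]; ring
          _ = (δ * δ * (1 - m')) * (1/16:ℝ) ^ (t+1) := by norm_num
      calc ∑ j ∈ Finset.Icc (l+1) m, η j
          ≤ ∑ j ∈ Finset.Icc (l+1) m, (δ * δ * (1 - m')) * (1/16:ℝ) ^ j :=
            Finset.sum_le_sum step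
        _ = (δ * δ * (1 - m')) * ∑ j ∈ Finset.Icc (l+1) m, (1/16:ℝ) ^ j := by
            rw [Finset.mul_sum]
        _ ≤ (δ * δ * (1 - m')) * (2 * (1/16:ℝ) ^ (l+1)) := by
            apply mul_le_mul_of_nonneg_left (geo_bound _ (by norm_num) (by norm_num) _ _)
            have h1 : (0:ℝ) ≤ 1 - m' := by linarith
            positivity
    have hiA : i 0 = iA := by
      rw [hiAdef]
      apply iInf_congr
      intro z
      show f z + ∑ k ∈ Finset.range 1, w k * dist z (c k) ^ 2 = f z + w 0 * dist z x₀ ^ 2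
      rw [Finset.sum_range_one, hc0]
    have hA : ∀ n, w 0 * dist (c (n+1)) x₀ ^ 2 ≤ ε * m' - Bs/4 := by
      intro n
      have e1 : fn 0 (c (n+1)) = f (c (n+1)) + w 0 * dist (c (n+1)) x₀ ^ 2 := by
        show f (c (n+1)) + ∑ k ∈ Finset.range 1, w k * dist (c (n+1)) (c k) ^ 2 = _
        rw [Finset.sum_range_one, hc0]
      have t1 : fn 0 (c (n+1)) ≤ fn n (c (n+1)) := hfn_mono 0 n (Nat.zero_le n) _
      have t2 := hchoice n
      have t3 := hIcc 0 n (Nat.zero_le n)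
      have t4 : ∑ j ∈ Finset.Icc 1 n, η j ≤ Bs * (1/2) := by
        have := hsum1 0 n
        norm_num at this
        exact this
      have t5 : η (n+1) ≤ Bs / 4 := by
        have h1 := hη1 (n+1)
        have h2 : (1/2:ℝ) ^ (n+2) ≤ (1/2:ℝ) ^ 2 :=
          pow_le_pow_of_le_one (by norm_num) (by norm_num) (by omega)
        have h3 : Bs * (1/2:ℝ) ^ (n+2) ≤ Bs * (1/2:ℝ) ^ 2 :=
          mul_le_mul_of_nonneg_left h2 hBs.le
        have h4 : Bs * (1/2:ℝ) ^ 2 = Bs / 4 := by ring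
        linarith
      have t6 := hi0 (c (n+1))
      have t7 : ∑ j ∈ Finset.Icc (0+1) n, η j = ∑ j ∈ Finset.Icc 1 n, η j := by norm_num
      rw [t7] at t3
      have t8 : iA = i 0 := hiA.symm
      have t9 : Bs = i0 + ε * m' - iA := hBsdef
      linarith
    have hA' : ∀ n, dist (c (n+1)) x₀ ^ 2 ≤ δ := by
      intro n
      have h1 := hA n
      rw [hw0] at h1
      have h2 : δ * m' * δ = ε * m' := by rw [← hδδ]; ring
      have h3 : δ * m' * dist (c (n+1)) x₀ ^ 2 ≤ δ * m' * δ := by linarith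
      exact le_of_mul_le_mul_left h3 (by positivity)
    have hdist0 : ∀ n, dist (c (n+1)) x₀ ≤ Real.sqrt δ := by
      intro n
      have h1 := Real.sqrt_le_sqrt (hA' n)
      rwa [Real.sqrt_sq dist_nonneg] at h1
    have hK' : ∀ l n, l ≤ n → dist (c (n+1)) (c (l+1)) ^ 2 ≤ 2 * δ * (1/8:ℝ) ^ (l+1) := by
      intro l n hln
      rcases eq_or_lt_of_le hln with rfl | hlt
      · rw [dist_self]
        have : (0:ℝ) ^ 2 = 0 := by norm_num
        rw [this]
        positivity
      · have hln' : l + 1 ≤ n := hlt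
        have u1 : fn (l+1) (c (n+1)) = fn l (c (n+1)) + w (l+1) * dist (c (n+1)) (c (l+1)) ^ 2 :=
          hfn_succ l (c (n+1))
        have u2 : fn (l+1) (c (n+1)) ≤ fn n (c (n+1)) := hfn_mono _ _ hln' _
        have u3 := hchoice n
        have u4 := hi_le l (c (n+1))
        have u5 := hIcc l n (le_of_lt hlt)
        have u6 : ∑ j ∈ Finset.Icc (l+1) (n+1), η j
            = ∑ j ∈ Finset.Icc (l+1) n, η j + η (n+1) :=
          Finset.sum_Icc_succ_top (by omega) η
        have u7 := hsum2 l (n+1)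
        have u8 : w (l+1) * dist (c (n+1)) (c (l+1)) ^ 2
            ≤ δ * δ * (1 - m') * (2 * (1/16:ℝ) ^ (l+1)) := by linarith
        have u9 : δ * δ * (1 - m') * (2 * (1/16:ℝ) ^ (l+1))
            = w (l+1) * (2 * δ * (1/8:ℝ) ^ (l+1)) := by
          rw [hwS l]
          have h1 : (1/16:ℝ) ^ (l+1) = (1/2:ℝ) ^ (l+1) * (1/8:ℝ) ^ (l+1) := by
            rw [← mul_pow]; norm_num
          rw [h1]; ring
        rw [u9] at u8
        exact le_of_mul_le_mul_left u8 (hw (l+1))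
    have hdistK : ∀ l n, l ≤ n →
        dist (c (n+1)) (c (l+1)) ≤ Real.sqrt (2 * δ * (1/8:ℝ) ^ (l+1)) := by
      intro l n hln
      have h1 := Real.sqrt_le_sqrt (hK' l n hln)
      rwa [Real.sqrt_sq dist_nonneg] at h1
    have hbnd_tendsto : Tendsto (fun k : ℕ => Real.sqrt (2 * δ * (1/8:ℝ) ^ k)) atTop (𝓝 0) := by
      have h1 : Tendsto (fun k : ℕ => 2 * δ * (1/8:ℝ) ^ k) atTop (𝓝 0) := by
        have h2 := tendsto_pow_atTop_nhds_zero_of_lt_one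
          (show (0:ℝ) ≤ 1/8 by norm_num) (show (1/8:ℝ) < 1 by norm_num)
        have h3 := h2.const_mul (2 * δ)
        simpa using h3
      have h2 : Tendsto (fun k : ℕ => Real.sqrt (2 * δ * (1/8:ℝ) ^ k)) atTop
          (𝓝 (Real.sqrt 0)) := (Real.continuous_sqrt.tendsto 0).comp h1
      rwa [Real.sqrt_zero] at h2
    have hcauchy : CauchySeq c := by
      rw [Metric.cauchySeq_iff']
      intro e he
      obtain ⟨K, hKall⟩ := eventually_atTop.1 (hbnd_tendsto.eventually (gt_mem_nhds he))
      refine ⟨K + 1, ?_⟩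
      intro n hn
      rcases eq_or_lt_of_le hn with rfl | hlt
      · rw [dist_self]; exact he
      · obtain ⟨n', rfl⟩ : ∃ n', n = n' + 1 := ⟨n - 1, by omega⟩
        have h1 : K ≤ n' := by omega
        have h2 := hdistK K n' h1
        have h3 := hKall (K+1) (by omega)
        exact lt_of_le_of_lt h2 h3
    obtain ⟨v, hv⟩ := cauchySeq_tendsto_of_complete hcauchy
    have hshift : Tendsto (fun n => c (n+1)) atTop (𝓝 v) :=
      hv.comp (tendsto_add_atTop_nat 1)
    have hdv : ∀ l, dist (c (l+1)) v ≤ Real.sqrt (2 * δ * (1/8:ℝ) ^ (l+1)) := by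
      intro l
      have h1 : Tendsto (fun n => dist (c (n+1)) (c (l+1))) atTop (𝓝 (dist v (c (l+1)))) :=
        hshift.dist tendsto_const_nhds
      have h2 : ∀ᶠ n in atTop, dist (c (n+1)) (c (l+1)) ≤ Real.sqrt (2 * δ * (1/8:ℝ) ^ (l+1)) :=
        eventually_atTop.2 ⟨l, fun n hn => hdistK l n hn⟩
      have h3 := le_of_tendsto h1 h2
      rwa [dist_comm] at h3
    have hdv0 : dist v x₀ ≤ Real.sqrt δ := by
      have h1 : Tendsto (fun n => dist (c (n+1)) x₀) atTop (𝓝 (dist v x₀)) :=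
        hshift.dist tendsto_const_nhds
      exact le_of_tendsto h1 (Eventually.of_forall hdist0)
    have sqrt8le : ∀ l : ℕ, Real.sqrt (2 * δ * (1/8:ℝ) ^ (l+1)) ≤ Real.sqrt δ := by
      intro l
      apply Real.sqrt_le_sqrt
      have h1 : (1/8:ℝ) ^ (l+1) ≤ (1/8:ℝ) ^ 1 :=
        pow_le_pow_of_le_one (by norm_num) (by norm_num) (by omega)
      nlinarith [hδ.le, pow_nonneg (show (0:ℝ) ≤ 1/8 by norm_num) (l+1)]
    have hckle : ∀ k, dist (c k) v ≤ ε ^ ((1:ℝ)/4) := by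
      intro k
      rw [hLδ]
      cases k with
      | zero =>
          have : dist (c 0) v = dist v x₀ := by rw [hc0, dist_comm]
          rw [this]; exact hdv0
      | succ l => exact (hdv l).trans (sqrt8le l)
    have htends : Tendsto (fun k => dist (c k) v) atTop (𝓝 0) := by
      have h1 : ∀ᶠ k in atTop, dist (c k) v ≤ Real.sqrt (2 * δ * (1/8:ℝ) ^ k) := by
        refine eventually_atTop.2 ⟨1, fun k hk => ?_⟩
        obtain ⟨l, rfl⟩ : ∃ l, k = l + 1 := ⟨k - 1, by omega⟩
        exact hdv l
      exact squeeze_zero' (Eventually.of_forall fun k => dist_nonneg) h1 hbnd_tendsto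
    obtain ⟨β, hβd⟩ : ∃ β : ℕ → ℝ, ∀ k, β k = w k / δ := ⟨_, fun _ => rfl⟩
    have hβ0 : ∀ k, 0 ≤ β k := fun k => (hβd k) ▸ div_nonneg (hw k).le hδ.le
    have hβsummable : Summable β := by
      apply Summable.of_nonneg_of_le hβ0 (fun k => ?_)
        (summable_geometric_of_lt_one (show (0:ℝ) ≤ 1/2 by norm_num) (by norm_num))
      rw [hβd, div_le_iff₀ hδ]
      calc w k ≤ δ * (1/2:ℝ) ^ k := hwle k
        _ = (1/2:ℝ) ^ k * δ := by ring
    have hβsum : ∑' k, β k = 1 := by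
      rw [Summable.tsum_eq_zero_add hβsummable]
      have e0 : β 0 = m' := by rw [hβd, hw0]; field_simp
      have e1 : ∑' (k:ℕ), β (k+1) = ∑' (k:ℕ), ((1 - m') * (1/2:ℝ)) * (1/2:ℝ) ^ k := by
        apply tsum_congr
        intro k
        rw [hβd, hwS, pow_succ]
        field_simp
      rw [e0, e1, tsum_mul_left, tsum_geometric_of_lt_one (by norm_num) (by norm_num)]
      norm_num
      ring
    have hsumz : ∀ z, Summable (fun k => w k * dist z (c k) ^ 2) := by
      intro z
      apply Summable.of_nonneg_of_le (fun k => mul_nonneg (hw k).le (sq_nonneg _)) (fun k => ?_)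
        (((summable_geometric_of_lt_one (show (0:ℝ) ≤ 1/2 by norm_num) (by norm_num))).mul_left
          (δ * (dist z v + ε ^ ((1:ℝ)/4)) ^ 2))
      have hd : dist z (c k) ≤ dist z v + ε ^ ((1:ℝ)/4) := by
        have h1 := dist_triangle z v (c k)
        have h2 : dist v (c k) = dist (c k) v := dist_comm _ _
        have h3 := hckle k
        linarith
      have hd2 : dist z (c k) ^ 2 ≤ (dist z v + ε ^ ((1:ℝ)/4)) ^ 2 :=
        pow_le_pow_left₀ dist_nonneg hd 2
      calc w k * dist z (c k) ^ 2 ≤ (δ * (1/2:ℝ) ^ k) * (dist z v + ε ^ ((1:ℝ)/4)) ^ 2 := by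
            apply mul_le_mul (hwle k) hd2 (sq_nonneg _) (by positivity)
        _ = δ * (dist z v + ε ^ ((1:ℝ)/4)) ^ 2 * (1/2:ℝ) ^ k := by ring
    have hδS : ∀ z, δ * ∑' k, β k * dist z (c k) ^ 2 = ∑' k, w k * dist z (c k) ^ 2 := by
      intro z
      rw [← tsum_mul_left]
      apply tsum_congr
      intro k
      rw [hβd]
      field_simp
    have hiub : ∀ n, i n ≤ i 0 + Bs / 2 := by
      intro n
      have h1 := hIcc 0 n (Nat.zero_le n)
      have h2 := hsum1 0 n
      have h3 : Bs * (1/2:ℝ) ^ (0+1) = Bs / 2 := by ring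
      linarith
    have hbddi : BddAbove (Set.range i) := ⟨i 0 + Bs/2, by rintro _ ⟨n, rfl⟩; exact hiub n⟩
    set I := ⨆ n, i n with hIdef
    have hiI : ∀ n, i n ≤ I := fun n => le_ciSup hbddi n
    have hIub : I ≤ i 0 + Bs/2 := ciSup_le hiub
    have hIg : ∀ z, I ≤ f z + ∑' k, w k * dist z (c k) ^ 2 := by
      intro z
      apply ciSup_le
      intro n
      have h1 : fn n z ≤ f z + ∑' k, w k * dist z (c k) ^ 2 := by
        show f z + ∑ k ∈ Finset.range (n+1), w k * dist z (c k) ^ 2 ≤ _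
        have h2 := Summable.sum_le_tsum (Finset.range (n+1))
          (fun k _ => mul_nonneg (hw k).le (sq_nonneg _)) (hsumz z)
        linarith
      exact (hi_le n z).trans h1
    have hfnNv : ∀ N, fn N v ≤ I := by
      intro N
      by_contra hcon
      push_neg at hcon
      set θ := (fn N v - I) / 3 with hθdef
      have hθ : 0 < θ := by rw [hθdef]; linarith
      have ev1 : ∀ᶠ n in atTop, f v - θ < f (c (n+1)) :=
        hshift.eventually (hlsc v (f v - θ) (by linarith))
      have hcont : Continuous (fun y => ∑ k ∈ Finset.range (N+1), w k * dist y (c k) ^ 2) := by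
        apply continuous_finset_sum
        intro k _
        exact continuous_const.mul ((continuous_id.dist continuous_const).pow 2)
      have ev2 : ∀ᶠ n in atTop,
          (∑ k ∈ Finset.range (N+1), w k * dist v (c k) ^ 2) - θ
            < ∑ k ∈ Finset.range (N+1), w k * dist (c (n+1)) (c k) ^ 2 := by
        have h1 : Tendsto (fun n => ∑ k ∈ Finset.range (N+1), w k * dist (c (n+1)) (c k) ^ 2)
            atTop (𝓝 (∑ k ∈ Finset.range (N+1), w k * dist v (c k) ^ 2)) :=
          (hcont.tendsto v).comp hshift
        exact h1.eventually (eventually_gt_nhds (by linarith))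
      have ev3 : ∀ᶠ n in atTop, η (n+1) < θ := by
        have h1 : Tendsto (fun n : ℕ => Bs * (1/2:ℝ) ^ (n+2)) atTop (𝓝 0) := by
          have heq : (fun n : ℕ => Bs * (1/2:ℝ) ^ (n+2))
              = fun n : ℕ => (Bs * (1/2:ℝ)^2) * (1/2:ℝ) ^ n := by
            funext n; rw [pow_add]; ring
          rw [heq]
          have h2 := (tendsto_pow_atTop_nhds_zero_of_lt_one
            (show (0:ℝ) ≤ 1/2 by norm_num) (by norm_num)).const_mul (Bs * (1/2:ℝ)^2)
          simpa using h2
        have h2 : ∀ᶠ n in atTop, Bs * (1/2:ℝ) ^ (n+2) < θ :=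
          h1.eventually (gt_mem_nhds hθ)
        filter_upwards [h2] with n hn
        exact lt_of_le_of_lt (hη1 (n+1)) hn
      have ev4 : ∀ᶠ n in atTop, N ≤ n := eventually_ge_atTop N
      obtain ⟨n, hh⟩ := (((ev1.and ev2).and ev3).and ev4).exists
      obtain ⟨⟨⟨h1, h2⟩, h3⟩, h4⟩ := hh
      have k1 : fn N (c (n+1)) ≤ fn n (c (n+1)) := hfn_mono N n h4 _
      have k2 := hchoice n
      have k3 := hiI n
      have kdef : fn N v = f v + ∑ k ∈ Finset.range (N+1), w k * dist v (c k) ^ 2 := rfl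
      have kdef2 : fn N (c (n+1))
          = f (c (n+1)) + ∑ k ∈ Finset.range (N+1), w k * dist (c (n+1)) (c k) ^ 2 := rfl
      linarith
    have hgv : f v + ∑' k, w k * dist v (c k) ^ 2 ≤ I := by
      have h1 : Tendsto (fun N => f v + ∑ k ∈ Finset.range N, w k * dist v (c k) ^ 2)
          atTop (𝓝 (f v + ∑' k, w k * dist v (c k) ^ 2)) :=
        tendsto_const_nhds.add (hsumz v).hasSum.tendsto_sum_nat
      apply le_of_tendsto h1
      refine eventually_atTop.2 ⟨1, fun N hN => ?_⟩
      obtain ⟨n, rfl⟩ : ∃ n, N = n + 1 := ⟨N - 1, by omega⟩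
      exact hfnNv n
    refine ⟨c, v, β, hβ0, hβsum, htends, hckle, ?_, ?_, ?_⟩
    · rw [hLδ]; exact hdv0
    · have h1 : (0:ℝ) ≤ ∑' k, w k * dist v (c k) ^ 2 :=
        tsum_nonneg fun k => mul_nonneg (hw k).le (sq_nonneg _)
      have h2 := hgv
      have h3 := hIub
      have h4 := hiA
      have h5 : ε * m' ≤ ε := by nlinarith [hm1, hε]
      have h6 : Bs = i0 + ε * m' - iA := hBsdef
      linarith [hBs]
    · intro z
      rw [hδS v, hδS z]
      exact hgv.trans (hIg z)


noncomputable section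

theorem stmt11 (Y : Type*) [MetricSpace Y] [CompleteSpace Y]
    (F : Y → EReal) (husc : UpperSemicontinuous F)
    (hne : ∃ y, F y ≠ ⊥) (hreal : ∀ y, F y ≠ ⊤)
    (hbdd : ∃ M : ℝ, ∀ y, F y ≤ (M : EReal))
    (ε : ℝ) (hε : 0 < ε) (y₀ : Y)
    (h₀ : sSup (Set.range F) - (ε : EReal) ≤ F y₀) :
    ∃ (y : ℕ → Y) (yε : Y) (β : ℕ → ℝ),
      (∀ k, 0 ≤ β k) ∧ (∑' k, β k) = 1 ∧
      Tendsto (fun k => dist (y k) yε) atTop (nhds 0) ∧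
      (∀ k, dist (y k) yε ≤ ε ^ ((1 : ℝ) / 4)) ∧
      dist yε y₀ ≤ ε ^ ((1 : ℝ) / 4) ∧
      sSup (Set.range F) - (ε : EReal) ≤ F yε ∧
      ∀ z : Y,
        F z - ((Real.sqrt ε * ∑' k, β k * dist z (y k) ^ 2 : ℝ) : EReal) ≤
        F yε - ((Real.sqrt ε * ∑' k, β k * dist yε (y k) ^ 2 : ℝ) : EReal) := by
  have hYne : Nonempty Y := ⟨y₀⟩
  obtain ⟨M, hM⟩ := hbdd
  obtain ⟨yh, hyh⟩ := hne
  set Se := sSup (Set.range F) with hSedef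
  have hSeM : Se ≤ (M : EReal) := sSup_le (by rintro _ ⟨y, rfl⟩; exact hM y)
  have hSetop : Se ≠ ⊤ := ne_top_of_le_ne_top (EReal.coe_ne_top M) hSeM
  have hSebot : Se ≠ ⊥ := by
    intro hbot
    have h1 : F yh ≤ Se := le_sSup ⟨yh, rfl⟩
    rw [hbot, le_bot_iff] at h1
    exact hyh h1
  set s := Se.toReal with hsdef
  have hs : (s : EReal) = Se := EReal.coe_toReal hSetop hSebot
  set cR := s - 2 * ε with hcRdef
  have hmax_top : ∀ y, max (F y) (cR : EReal) ≠ ⊤ := by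
    intro y
    have h1 : F y < ⊤ := (hreal y).lt_top
    have h2 : (cR : EReal) < ⊤ := EReal.coe_lt_top cR
    exact (max_lt h1 h2).ne
  have hmax_bot : ∀ y, max (F y) (cR : EReal) ≠ ⊥ := by
    intro y
    intro hbot
    have h1 : (cR : EReal) ≤ max (F y) (cR : EReal) := le_max_right _ _
    rw [hbot, le_bot_iff] at h1
    exact EReal.coe_ne_bot cR h1
  set φ : Y → ℝ := fun y => (max (F y) (cR : EReal)).toReal with hφdef
  have hφcoe : ∀ y, (φ y : EReal) = max (F y) (cR : EReal) :=
    fun y => EReal.coe_toReal (hmax_top y) (hmax_bot y)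
  have hφle : ∀ y, F y ≤ (φ y : EReal) := fun y => (hφcoe y) ▸ le_max_left _ _
  have hφlb : ∀ y, cR ≤ φ y := fun y =>
    EReal.coe_le_coe_iff.1 ((hφcoe y) ▸ le_max_right (F y) (cR : EReal))
  have hφs : ∀ y, φ y ≤ s := by
    intro y
    apply EReal.coe_le_coe_iff.1
    rw [hφcoe, hs]
    apply max_le
    · exact le_sSup ⟨y, rfl⟩
    · rw [← hs]
      exact EReal.coe_le_coe_iff.2 (by rw [hcRdef]; linarith)
  have huscφ : UpperSemicontinuous φ := by
    intro x r hr
    have h1 : max (F x) (cR : EReal) < (r : EReal) := by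
      rw [← hφcoe]
      exact EReal.coe_lt_coe_iff.2 hr
    have h2 : F x < (r : EReal) := lt_of_le_of_lt (le_max_left _ _) h1
    have h3 : (cR : EReal) < (r : EReal) := lt_of_le_of_lt (le_max_right _ _) h1
    filter_upwards [husc x (r : EReal) h2] with y hy
    have h4 : max (F y) (cR : EReal) < (r : EReal) := max_lt hy h3
    apply EReal.coe_lt_coe_iff.1
    rw [hφcoe]
    exact h4
  set f : Y → ℝ := fun y => -φ y with hfdef
  have hlsc : LowerSemicontinuous f := by
    intro x r hr
    have h1 : φ x < -r := by
      have : r < -φ x := hr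
      linarith
    filter_upwards [huscφ x (-r) h1] with y hy
    show r < -φ y
    linarith
  have hlb : ∀ y, -s ≤ f y := fun y => by
    show -s ≤ -φ y
    linarith [hφs y]
  have hbddbelow : BddBelow (Set.range f) := ⟨-s, by rintro _ ⟨y, rfl⟩; exact hlb y⟩
  have hinf : (⨅ y, f y) = -s := by
    apply le_antisymm
    · by_contra hcon
      push_neg at hcon
      have h1 : ∀ y, f y ≥ ⨅ y, f y := fun y => ciInf_le hbddbelow y
      have h2 : ∀ y, φ y ≤ -(⨅ y, f y) := by
        intro y
        have := h1 y
        show φ y ≤ _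
        have h3 : -φ y ≥ ⨅ y, f y := this
        linarith
      have h3 : Se ≤ ((-(⨅ y, f y) : ℝ) : EReal) := by
        apply sSup_le
        rintro _ ⟨y, rfl⟩
        exact (hφle y).trans (EReal.coe_le_coe_iff.2 (h2 y))
      rw [← hs] at h3
      have h4 : s ≤ -(⨅ y, f y) := EReal.coe_le_coe_iff.1 h3
      linarith
    · exact le_ciInf fun y => hlb y
  have hx₀ : f y₀ ≤ (⨅ y, f y) + ε := by
    have h1 : ((s - ε : ℝ) : EReal) ≤ F y₀ := by
      rw [EReal.coe_sub, hs]
      exact h₀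
    have h2 : ((s - ε : ℝ) : EReal) ≤ (φ y₀ : EReal) := h1.trans (hφle y₀)
    have h3 : s - ε ≤ φ y₀ := EReal.coe_le_coe_iff.1 h2
    show -φ y₀ ≤ _
    rw [hinf]
    linarith
  obtain ⟨c, v, β, hβ0, hβ1, htd, hbnd, hdvx, hfv, hmin⟩ :=
    bp_core f hlsc (-s) hlb ε hε y₀ hx₀
  have hφv : s - ε ≤ φ v := by
    have h1 : -φ v ≤ -s + ε := by
      have := hfv
      rw [hinf] at this
      exact this
    linarith
  have hFv : F v = (φ v : EReal) := by
    rcases max_choice (F v) (cR : EReal) with h | h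
    · rw [hφcoe, h]
    · exfalso
      have h1 : (φ v : EReal) = (cR : EReal) := by rw [hφcoe, h]
      have h2 : φ v = cR := EReal.coe_le_coe_iff.1 h1.le |>.antisymm (EReal.coe_le_coe_iff.1 h1.ge)
      rw [hcRdef] at h2
      linarith
  refine ⟨c, v, β, hβ0, hβ1, htd, hbnd, hdvx, ?_, ?_⟩
  · rw [← hs, ← EReal.coe_sub, hFv]
    exact EReal.coe_le_coe_iff.2 (by linarith)
  · intro z
    have hreal_ineq : φ z - Real.sqrt ε * ∑' k, β k * dist z (c k) ^ 2 ≤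
        φ v - Real.sqrt ε * ∑' k, β k * dist v (c k) ^ 2 := by
      have := hmin z
      show _ ≤ _
      have h1 : f v = -φ v := rfl
      have h2 : f z = -φ z := rfl
      rw [h1, h2] at this
      linarith
    calc F z - ((Real.sqrt ε * ∑' k, β k * dist z (c k) ^ 2 : ℝ) : EReal)
        ≤ (φ z : EReal) - ((Real.sqrt ε * ∑' k, β k * dist z (c k) ^ 2 : ℝ) : EReal) :=
          EReal.sub_le_sub (hφle z) (le_refl _)
      _ = ((φ z - Real.sqrt ε * ∑' k, β k * dist z (c k) ^ 2 : ℝ) : EReal) :=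
          (EReal.coe_sub _ _).symm
      _ ≤ ((φ v - Real.sqrt ε * ∑' k, β k * dist v (c k) ^ 2 : ℝ) : EReal) :=
          EReal.coe_le_coe_iff.2 hreal_ineq
      _ = (φ v : EReal) - ((Real.sqrt ε * ∑' k, β k * dist v (c k) ^ 2 : ℝ) : EReal) :=
          EReal.coe_sub _ _
      _ = F v - ((Real.sqrt ε * ∑' k, β k * dist v (c k) ^ 2 : ℝ) : EReal) := by rw [hFv]
end
end

section
/- Let A be a symmetric positive semidefinite d×d matrix and γ ∈ C²(ℝ^d) with γ ≥ 1 and ∑_{i,j}|∂²_{ij}γ| ≤ κγ. Then for u, v ∈ H¹(γ) with sufficient decay for integration by parts: ∫⟨A∇((u−v)γ), ∇u − ∇v⟩ dx ≥ −(κ/4)(∑_{i,j}|a_{ij}|) ‖u − v‖²_{L²(γ)}. -/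
open MeasureTheory Real

noncomputable section

private lemma oneD (f : ℝ → ℝ) (κ : ℝ) (hκ : 0 ≤ κ) (hfd : Differentiable ℝ f)
    (hfd1 : Differentiable ℝ (deriv f))
    (hf1 : ∀ t, 1 ≤ f t) (hf'' : ∀ t, deriv (deriv f) t ≤ κ * f t) :
    deriv f 0 ≤ Real.sqrt κ * f 0 := by
  by_contra hcon
  push_neg at hcon
  set c := Real.sqrt κ with hc
  have hc0 : 0 ≤ c := Real.sqrt_nonneg κ
  have hcc : c * c = κ := Real.mul_self_sqrt hκ
  set g := fun t => deriv f t - c * f t with hgdef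
  have hg0 : 0 < g 0 := by simp only [hgdef]; linarith
  have hgd : Differentiable ℝ g := hfd1.sub (hfd.const_mul c)
  have hGder : ∀ t, HasDerivAt (fun s => Real.exp (c*s) * g s)
      (c * Real.exp (c*t) * g t + Real.exp (c*t) * deriv g t) t := by
    intro t
    have h1 : HasDerivAt (fun s => Real.exp (c*s)) (Real.exp (c*t) * c) t := by
      have := (Real.hasDerivAt_exp (c*t)).comp t ((hasDerivAt_id t).const_mul c)
      simpa [Function.comp_def] using this
    have h2 : HasDerivAt g (deriv g t) t := (hgd t).hasDerivAt
    have := h1.mul h2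
    refine this.congr_deriv ?_
    ring
  have hgderiv : ∀ t, deriv g t = deriv (deriv f) t - c * deriv f t := by
    intro t
    rw [hgdef]
    rw [deriv_fun_sub (hfd1 t) ((hfd t).const_mul c), deriv_const_mul c (hfd t)]
  have hanti : AntitoneOn (fun s => Real.exp (c*s) * g s) Set.univ := by
    apply antitoneOn_of_deriv_nonpos convex_univ
    · exact (Continuous.mul (by fun_prop) hgd.continuous).continuousOn
    · intro x _
      exact ((hGder x).differentiableAt).differentiableWithinAt
    · intro x _
      rw [(hGder x).deriv]
      have hkey : c * g x + deriv g x = deriv (deriv f) x - κ * f x := by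
        rw [hgderiv x]; simp only [hgdef]; rw [← hcc]; ring
      have h2 : c * g x + deriv g x ≤ 0 := by
        rw [hkey]; linarith [hf'' x]
      nlinarith [Real.exp_pos (c*x)]
  have hglb : ∀ t ≤ (0:ℝ), g 0 ≤ g t := by
    intro t ht
    have h1 := hanti (Set.mem_univ t) (Set.mem_univ 0) ht
    simp only [mul_zero, Real.exp_zero, one_mul] at h1
    have h2 : Real.exp (c*t) ≤ 1 :=
      Real.exp_le_one_iff.mpr (mul_nonpos_of_nonneg_of_nonpos hc0 ht)
    nlinarith [Real.exp_pos (c*t)]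
  have hf'lb : ∀ t ≤ (0:ℝ), g 0 ≤ deriv f t := by
    intro t ht
    have := hglb t ht
    have hcf : 0 ≤ c * f t := mul_nonneg hc0 (le_trans zero_le_one (hf1 t))
    simp only [hgdef] at this ⊢
    linarith
  have hmono : MonotoneOn (fun t => f t - g 0 * t) (Set.Iic 0) := by
    apply monotoneOn_of_deriv_nonneg (convex_Iic 0)
    · exact (hfd.continuous.sub (continuous_const.mul continuous_id)).continuousOn
    · intro x _
      exact (hfd.sub ((differentiable_id.const_mul _))).differentiableAt.differentiableWithinAt
    · intro x hx
      rw [interior_Iic] at hx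
      have hD : HasDerivAt (fun t => f t - g 0 * t) (deriv f x - g 0) x := by
        exact ((hfd x).hasDerivAt.sub ((hasDerivAt_id x).const_mul (g 0))).congr_deriv (by simp)
      rw [hD.deriv]
      linarith [hf'lb x (le_of_lt hx)]
  set t0 : ℝ := -(f 0) / g 0 with ht0
  have ht0le : t0 ≤ 0 := by
    apply div_nonpos_of_nonpos_of_nonneg <;> linarith [hf1 0]
  have := hmono (Set.mem_Iic.mpr ht0le) (Set.mem_Iic.mpr le_rfl) ht0le
  simp only [mul_zero, sub_zero] at this
  have hval : g 0 * t0 = -(f 0) := by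
    rw [ht0]; field_simp
  have : f t0 ≤ 0 := by linarith [this]
  linarith [hf1 t0]

private lemma dirBound {d : ℕ} (κ : ℝ) (hκ : 0 ≤ κ) (γ : EuclideanSpace ℝ (Fin d) → ℝ)
    (hγC2 : ContDiff ℝ 2 γ) (hγ1 : ∀ x, 1 ≤ γ x) (e : EuclideanSpace ℝ (Fin d))
    (he : ∀ y, fderiv ℝ (fun z => fderiv ℝ γ z e) y e ≤ κ * γ y)
    (x : EuclideanSpace ℝ (Fin d)) :
    fderiv ℝ γ x e ≤ Real.sqrt κ * γ x := by
  have hγd : Differentiable ℝ γ := hγC2.differentiable (by norm_num)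
  set φ := fun y => fderiv ℝ γ y e with hφdef
  have hφd : Differentiable ℝ φ := by
    have h1 : ContDiff ℝ 1 (fderiv ℝ γ) := hγC2.fderiv_right (by norm_num)
    exact (h1.clm_apply contDiff_const).differentiable (by norm_num)
  set L := fun t : ℝ => x + t • e with hLdef
  have hL : ∀ t, HasDerivAt L e t := by
    intro t
    exact (((hasDerivAt_id t).smul_const e).const_add x).congr_deriv (by simp)
  set f := fun t => γ (L t) with hfdef
  have hfder : ∀ t, HasDerivAt f (φ (L t)) t := by
    intro t
    exact ((hγd (L t)).hasFDerivAt.comp_hasDerivAt t (hL t))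
  have hf'eq : deriv f = fun t => φ (L t) := funext fun t => (hfder t).deriv
  have hfd2 : ∀ t, HasDerivAt (fun t => φ (L t)) (fderiv ℝ φ (L t) e) t := by
    intro t
    exact ((hφd (L t)).hasFDerivAt.comp_hasDerivAt t (hL t))
  have key := oneD f κ hκ (fun t => (hfder t).differentiableAt)
    (by rw [hf'eq]; exact fun t => (hfd2 t).differentiableAt)
    (fun t => hγ1 (L t))
    (by
      intro t
      rw [hf'eq, (hfd2 t).deriv]
      exact he (L t))
  have hL0 : L 0 = x := by simp [hLdef]
  rw [(hfder 0).deriv] at key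
  rw [hL0] at key
  simpa [hfdef, hL0] using key

private lemma coordBound {d : ℕ} (κ : ℝ) (γ : EuclideanSpace ℝ (Fin d) → ℝ)
    (hγC2 : ContDiff ℝ 2 γ) (hγ1 : ∀ x, 1 ≤ γ x)
    (hγ2nd : ∀ x : EuclideanSpace ℝ (Fin d),
      (∑ i : Fin d, ∑ j : Fin d,
        |fderiv ℝ (fun y => fderiv ℝ γ y (EuclideanSpace.single i 1)) x
          (EuclideanSpace.single j 1)|) ≤ κ * γ x)
    (i : Fin d) (x : EuclideanSpace ℝ (Fin d)) :
    |fderiv ℝ γ x (EuclideanSpace.single i 1)| ≤ Real.sqrt κ * γ x := by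
  have hκ : 0 ≤ κ := by
    have h := hγ2nd 0
    have h2 : (0:ℝ) ≤ ∑ i : Fin d, ∑ j : Fin d,
        |fderiv ℝ (fun y => fderiv ℝ γ y (EuclideanSpace.single i 1)) 0
          (EuclideanSpace.single j 1)| :=
      Finset.sum_nonneg fun _ _ => Finset.sum_nonneg fun _ _ => abs_nonneg _
    nlinarith [hγ1 0]
  set e := EuclideanSpace.single i (1:ℝ) with hedef
  have hterm : ∀ y, |fderiv ℝ (fun z => fderiv ℝ γ z e) y e| ≤ κ * γ y := by
    intro y
    refine le_trans ?_ (hγ2nd y)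
    have h1 : ∀ i' ∈ Finset.univ, (0:ℝ) ≤ ∑ j : Fin d,
        |fderiv ℝ (fun z => fderiv ℝ γ z (EuclideanSpace.single i' 1)) y
          (EuclideanSpace.single j 1)| :=
      fun _ _ => Finset.sum_nonneg fun _ _ => abs_nonneg _
    refine le_trans ?_ (Finset.single_le_sum h1 (Finset.mem_univ i))
    exact Finset.single_le_sum (f := fun j => |fderiv ℝ (fun z => fderiv ℝ γ z e) y
      (EuclideanSpace.single j 1)|) (fun _ _ => abs_nonneg _) (Finset.mem_univ i)
  have hub : fderiv ℝ γ x e ≤ Real.sqrt κ * γ x :=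
    dirBound κ hκ γ hγC2 hγ1 e (fun y => le_trans (le_abs_self _) (hterm y)) x
  have hlb : -(Real.sqrt κ * γ x) ≤ fderiv ℝ γ x e := by
    have hneg : ∀ y, fderiv ℝ (fun z => fderiv ℝ γ z (-e)) y (-e) ≤ κ * γ y := by
      intro y
      have heq : (fun z => fderiv ℝ γ z (-e)) = fun z => -(fderiv ℝ γ z e) := by
        funext z; exact map_neg _ _
      rw [heq]
      have : fderiv ℝ (fun z => -(fderiv ℝ γ z e)) y
          = -(fderiv ℝ (fun z => fderiv ℝ γ z e) y) := fderiv_neg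
      rw [this]
      simp only [ContinuousLinearMap.neg_apply, map_neg, neg_neg]
      exact le_trans (le_abs_self _) (hterm y)
    have := dirBound κ hκ γ hγC2 hγ1 (-e) hneg x
    rw [map_neg] at this
    linarith
  rw [abs_le]
  exact ⟨hlb, hub⟩

private lemma psd_quad {d : ℕ} (A : Matrix (Fin d) (Fin d) ℝ) (hA : A.PosSemidef) (z : Fin d → ℝ) :
    0 ≤ ∑ i, ∑ j, A i j * z i * z j := by
  have h := hA.dotProduct_mulVec_nonneg z
  simp only [dotProduct, Matrix.mulVec, Pi.star_apply, star_trivial] at h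
  calc (0:ℝ) ≤ _ := h
    _ = _ := by
      apply Finset.sum_congr rfl; intro i _
      rw [Finset.mul_sum]
      apply Finset.sum_congr rfl; intro j _
      ring

private lemma ptwise {d : ℕ} (A : Matrix (Fin d) (Fin d) ℝ) (hA : A.PosSemidef)
    (κ G W : ℝ) (hG : 1 ≤ G) (hκ : 0 ≤ κ) (p q : Fin d → ℝ)
    (hq : ∀ j, |q j| ≤ Real.sqrt κ * G) :
    -(κ / 4) * (∑ i, ∑ j, |A i j|) * (W ^ 2 * G) ≤
      ∑ i, ∑ j, A i j * (G * p j + W * q j) * p i := by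
  have hAsym : ∀ i j, A i j = A j i := by
    intro i j
    have h2 := congrFun (congrFun hA.1 j) i
    simpa [Matrix.conjTranspose_apply] using h2
  have hG0 : (0:ℝ) < G := lt_of_lt_of_le one_pos hG
  set s := Real.sqrt G with hsdef
  have hs0 : 0 < s := Real.sqrt_pos.mpr hG0
  have hss : s * s = G := Real.mul_self_sqrt hG0.le
  set r := W / (2 * s) with hrdef
  set z := fun k => s * p k + r * q k with hzdef
  have hQz : 0 ≤ ∑ i, ∑ j, A i j * z i * z j := psd_quad A hA z
  set Qpp := ∑ i, ∑ j, A i j * p i * p j with hQpp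
  set Qpq := ∑ i, ∑ j, A i j * p i * q j with hQpq
  set Qqp := ∑ i, ∑ j, A i j * q i * p j with hQqp
  set Qqq := ∑ i, ∑ j, A i j * q i * q j with hQqq
  have hsym : Qqp = Qpq := by
    rw [hQqp, hQpq, Finset.sum_comm]
    apply Finset.sum_congr rfl; intro i _
    apply Finset.sum_congr rfl; intro j _
    rw [hAsym i j]; ring
  have hexpand : ∑ i, ∑ j, A i j * z i * z j
      = (s*s) * Qpp + (s*r) * Qpq + (s*r) * Qqp + (r*r) * Qqq := by
    simp only [hQpp, hQpq, hQqp, hQqq, Finset.mul_sum]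
    rw [← Finset.sum_add_distrib, ← Finset.sum_add_distrib, ← Finset.sum_add_distrib]
    apply Finset.sum_congr rfl; intro i _
    rw [← Finset.sum_add_distrib, ← Finset.sum_add_distrib, ← Finset.sum_add_distrib]
    apply Finset.sum_congr rfl; intro j _
    simp only [hzdef]
    ring
  have hT : ∑ i, ∑ j, A i j * (G * p j + W * q j) * p i
      = G * Qpp + W * Qpq := by
    simp only [hQpp, hQpq, Finset.mul_sum]
    rw [← Finset.sum_add_distrib]
    apply Finset.sum_congr rfl; intro i _
    rw [← Finset.sum_add_distrib]
    apply Finset.sum_congr rfl; intro j _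
    rw [hAsym i j]
    ring
  have hsr : s * r = W / 2 := by
    rw [hrdef]; field_simp
  have hrr : r * r = W^2 / (4 * G) := by
    rw [hrdef]; field_simp; nlinarith [hss]
  have hTz : ∑ i, ∑ j, A i j * (G * p j + W * q j) * p i
      = (∑ i, ∑ j, A i j * z i * z j) - (W^2 / (4*G)) * Qqq := by
    rw [hexpand, hT, hsym, hss, hsr, hrr]; ring
  have hQqqb : Qqq ≤ (∑ i, ∑ j, |A i j|) * (κ * G^2) := by
    rw [hQqq, Finset.sum_mul]
    apply Finset.sum_le_sum; intro i _
    rw [Finset.sum_mul]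
    apply Finset.sum_le_sum; intro j _
    have h1 : A i j * q i * q j ≤ |A i j| * (|q i| * |q j|) := by
      calc A i j * q i * q j ≤ |A i j * q i * q j| := le_abs_self _
        _ = |A i j| * (|q i| * |q j|) := by rw [abs_mul, abs_mul]; ring
    refine le_trans h1 ?_
    have h2 : |q i| * |q j| ≤ (Real.sqrt κ * G) * (Real.sqrt κ * G) :=
      mul_le_mul (hq i) (hq j) (abs_nonneg _) (by positivity)
    have h3 : (Real.sqrt κ * G) * (Real.sqrt κ * G) = κ * G^2 := by
      rw [show (Real.sqrt κ * G) * (Real.sqrt κ * G) = (Real.sqrt κ * Real.sqrt κ) * G^2 by ring,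
        Real.mul_self_sqrt hκ]
    rw [← h3]
    exact mul_le_mul_of_nonneg_left h2 (abs_nonneg _)
  rw [hTz]
  have hc : 0 ≤ W^2 / (4*G) := by positivity
  have := mul_le_mul_of_nonneg_left hQqqb hc
  have heq : W^2/(4*G) * ((∑ i, ∑ j, |A i j|) * (κ * G^2))
      = (κ/4) * (∑ i, ∑ j, |A i j|) * (W^2 * G) := by
    field_simp
  nlinarith [hQz]

private lemma gradCoord {d : ℕ} (f : EuclideanSpace ℝ (Fin d) → ℝ)
    (x : EuclideanSpace ℝ (Fin d)) (j : Fin d) :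
    (gradient f x) j = fderiv ℝ f x (EuclideanSpace.single j 1) := by
  have h : (inner ℝ (gradient f x) (EuclideanSpace.single j (1:ℝ)) : ℝ)
      = fderiv ℝ f x (EuclideanSpace.single j 1) := by
    rw [gradient]
    exact InnerProductSpace.toDual_symm_apply
  rw [← h, EuclideanSpace.inner_single_right]
  simp

theorem stmt13 (d : ℕ) (κ : ℝ) (A : Matrix (Fin d) (Fin d) ℝ)
    (hA : A.PosSemidef)
    (γ u v : EuclideanSpace ℝ (Fin d) → ℝ)
    (hγC2 : ContDiff ℝ 2 γ) (hγ1 : ∀ x, 1 ≤ γ x)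
    (hγ2nd : ∀ x : EuclideanSpace ℝ (Fin d),
      (∑ i : Fin d, ∑ j : Fin d,
        |fderiv ℝ (fun y => fderiv ℝ γ y (EuclideanSpace.single i 1)) x
          (EuclideanSpace.single j 1)|) ≤ κ * γ x)
    (hu : ContDiff ℝ 1 u) (hv : ContDiff ℝ 1 v)
    (husupp : HasCompactSupport u) (hvsupp : HasCompactSupport v) :
    (∫ x, ∑ i : Fin d, ∑ j : Fin d,
        A i j * (gradient (fun y => (u y - v y) * γ y) x) j *
          (gradient (fun y => u y - v y) x) i) ≥
      -(κ / 4) * (∑ i : Fin d, ∑ j : Fin d, |A i j|) *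
        ∫ x, (u x - v x) ^ 2 * γ x := by
  have hκ : 0 ≤ κ := by
    have h := hγ2nd 0
    have h2 : (0:ℝ) ≤ ∑ i : Fin d, ∑ j : Fin d,
        |fderiv ℝ (fun y => fderiv ℝ γ y (EuclideanSpace.single i 1)) 0
          (EuclideanSpace.single j 1)| :=
      Finset.sum_nonneg fun _ _ => Finset.sum_nonneg fun _ _ => abs_nonneg _
    nlinarith [hγ1 0]
  have hwC : ContDiff ℝ 1 (fun y => u y - v y) := hu.sub hv
  have hwd : Differentiable ℝ (fun y => u y - v y) := hwC.differentiable (by norm_num)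
  have hγd : Differentiable ℝ γ := hγC2.differentiable (by norm_num)
  have hwγC : ContDiff ℝ 1 (fun y => (u y - v y) * γ y) :=
    hwC.mul (hγC2.of_le one_le_two)
  have hwsupp : HasCompactSupport (fun y => u y - v y) := by
    have h2 : HasCompactSupport (fun y => -(v y)) := by
      apply hvsupp.comp_left (g := fun t : ℝ => -t); simp
    have : (fun y => u y - v y) = fun y => u y + (-(v y)) := by funext y; ring
    rw [this]; exact husupp.add h2
  set F := fun x => ∑ i : Fin d, ∑ j : Fin d,
        A i j * (gradient (fun y => (u y - v y) * γ y) x) j *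
          (gradient (fun y => u y - v y) x) i with hFdef
  set H := fun x => (u x - v x) ^ 2 * γ x with hHdef
  set S := ∑ i : Fin d, ∑ j : Fin d, |A i j| with hSdef
  -- pointwise bound
  have hpt : ∀ x, -(κ/4) * S * H x ≤ F x := by
    intro x
    have hq : ∀ i, |fderiv ℝ γ x (EuclideanSpace.single i 1)| ≤ Real.sqrt κ * γ x :=
      fun i => coordBound κ γ hγC2 hγ1 hγ2nd i x
    have h1 : ∀ j : Fin d, (gradient (fun y => (u y - v y) * γ y) x) j
        = γ x * fderiv ℝ (fun y => u y - v y) x (EuclideanSpace.single j 1)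
          + (u x - v x) * fderiv ℝ γ x (EuclideanSpace.single j 1) := by
      intro j
      rw [gradCoord, fderiv_fun_mul (hwd x) (hγd x)]
      simp only [ContinuousLinearMap.add_apply, ContinuousLinearMap.smul_apply, smul_eq_mul]
      ring
    have h2 : ∀ i : Fin d, (gradient (fun y => u y - v y) x) i
        = fderiv ℝ (fun y => u y - v y) x (EuclideanSpace.single i 1) :=
      fun i => gradCoord _ x i
    have hFx : F x = ∑ i : Fin d, ∑ j : Fin d,
        A i j * (γ x * fderiv ℝ (fun y => u y - v y) x (EuclideanSpace.single j 1)
          + (u x - v x) * fderiv ℝ γ x (EuclideanSpace.single j 1))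
          * fderiv ℝ (fun y => u y - v y) x (EuclideanSpace.single i 1) := by
      rw [hFdef]
      apply Finset.sum_congr rfl; intro i _
      apply Finset.sum_congr rfl; intro j _
      rw [h1 j, h2 i]
    rw [hFx, hHdef]
    exact ptwise A hA κ (γ x) (u x - v x) (hγ1 x) hκ
      (fun k => fderiv ℝ (fun y => u y - v y) x (EuclideanSpace.single k 1))
      (fun k => fderiv ℝ γ x (EuclideanSpace.single k 1)) hq
  -- continuity
  have hgradc : ∀ (f : EuclideanSpace ℝ (Fin d) → ℝ), ContDiff ℝ 1 f →
      Continuous (fun x => gradient f x) := by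
    intro f hf
    have h1 : Continuous (fderiv ℝ f) := hf.continuous_fderiv (by norm_num)
    exact ((InnerProductSpace.toDual ℝ
      (EuclideanSpace ℝ (Fin d))).symm.continuous.comp h1 : _)
  have hg1c := hgradc _ hwγC
  have hg2c := hgradc _ hwC
  have hFc : Continuous F := by
    rw [hFdef]
    apply continuous_finset_sum; intro i _
    apply continuous_finset_sum; intro j _
    exact (continuous_const.mul ((EuclideanSpace.proj j).continuous.comp hg1c)).mul
      ((EuclideanSpace.proj i).continuous.comp hg2c)
  have hg2supp : HasCompactSupport (fun x => gradient (fun y => u y - v y) x) := by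
    have h1 : HasCompactSupport (fderiv ℝ (fun y => u y - v y)) := hwsupp.fderiv ℝ
    exact h1.comp_left
      (g := (InnerProductSpace.toDual ℝ (EuclideanSpace ℝ (Fin d))).symm) (map_zero _)
  have hFsupp : HasCompactSupport F := by
    apply hg2supp.mono
    intro x hx
    simp only [Function.mem_support] at hx ⊢
    intro h0
    apply hx
    rw [hFdef]
    simp only [h0]
    simp
  have hHc : Continuous H := ((hu.continuous.sub hv.continuous).pow 2).mul hγC2.continuous
  have hHsupp : HasCompactSupport H := by
    apply hwsupp.mono
    intro x hx
    simp only [Function.mem_support] at hx ⊢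
    intro h0
    apply hx
    rw [hHdef]
    simp [h0]
  have hintF : Integrable F := hFc.integrable_of_hasCompactSupport hFsupp
  have hintH : Integrable H := hHc.integrable_of_hasCompactSupport hHsupp
  have hint3 : Integrable (fun x => -(κ/4) * S * H x) := hintH.const_mul _
  have hmono := integral_mono hint3 hintF hpt
  rw [integral_const_mul] at hmono
  exact hmono
end
end
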